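/- arXiv:1512.04222 — 8 statements merged into one kernel-verified Lean document; each statement's English description precedes it below -/
import Mathlib

section
/- Let n ≥ 1, ρ ∈ (0, 1/2], let G be a nonsplit communication graph on n nodes, let x ∈ ℝ^n, and let x' ∈ ℝ^n be a ρ-safe update of x along G. Then δ(x') ≤ (1 − ρ)·δ(x). (A ρ-safe averaging algorithm is (1−ρ)-contracting in any nonsplit network model.) -/
/-- `δ(x) = max_p x_p − min_p x_p`. -/
noncomputable def delta {n : ℕ} (x : Fin n → ℝ) : ℝ :=
  sSup (Set.range x) - sInf (Set.range x)

/-- A communication graph is nonsplit if any two nodes have a common incoming neighbor. -/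
def Nonsplit {n : ℕ} (E : Fin n → Fin n → Prop) : Prop :=
  ∀ p q, ∃ r, E r p ∧ E r q

/-- `x'` is a ρ-safe update of `x` along the graph `E`: for every node `p`, with
`m_p`, `M_p` the min and max of the values of `p`'s incoming neighbors,
`ρ·M_p + (1−ρ)·m_p ≤ x'_p ≤ (1−ρ)·M_p + ρ·m_p`. -/
def SafeUpdate {n : ℕ} (ρ : ℝ) (E : Fin n → Fin n → Prop) (x x' : Fin n → ℝ) : Prop :=
  ∀ p, ρ * sSup (x '' {q | E q p}) + (1 - ρ) * sInf (x '' {q | E q p}) ≤ x' p ∧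
       x' p ≤ (1 - ρ) * sSup (x '' {q | E q p}) + ρ * sInf (x '' {q | E q p})

theorem safe_update_contracting
    (n : ℕ) (hn : 1 ≤ n) (ρ : ℝ) (hρ0 : 0 < ρ) (hρ2 : ρ ≤ 1 / 2)
    (E : Fin n → Fin n → Prop) (hrefl : ∀ p, E p p) (hns : Nonsplit E)
    (x x' : Fin n → ℝ) (hsafe : SafeUpdate ρ E x x') :
    delta x' ≤ (1 - ρ) * delta x := by
  have hne : Nonempty (Fin n) := ⟨⟨0, hn⟩⟩
  set S : Fin n → Set ℝ := fun p => x '' {q | E q p} with hS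
  have hSne : ∀ p, (S p).Nonempty := fun p => ⟨x p, p, hrefl p, rfl⟩
  have hSfin : ∀ p, (S p).Finite := fun p => Set.toFinite _
  have hSsub : ∀ p, S p ⊆ Set.range x := fun p y ⟨q, _, hq⟩ => ⟨q, hq⟩
  have hrfin : (Set.range x).Finite := Set.finite_range x
  have hrne : (Set.range x).Nonempty := Set.range_nonempty x
  have hr'fin : (Set.range x').Finite := Set.finite_range x'
  have hr'ne : (Set.range x').Nonempty := Set.range_nonempty x'
  -- attainment of sup/inf of x'
  obtain ⟨p, hp⟩ : sSup (Set.range x') ∈ Set.range x' := hr'ne.csSup_mem hr'fin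
  obtain ⟨q, hq⟩ : sInf (Set.range x') ∈ Set.range x' := hr'ne.csInf_mem hr'fin
  obtain ⟨r, hrp, hrq⟩ := hns p q
  -- key inequalities
  have hSupP : sSup (S p) ≤ sSup (Set.range x) :=
    csSup_le_csSup hrfin.bddAbove (hSne p) (hSsub p)
  have hInfQ : sInf (Set.range x) ≤ sInf (S q) :=
    csInf_le_csInf hrfin.bddBelow (hSne q) (hSsub q)
  have hxrP : sInf (S p) ≤ x r := csInf_le (hSfin p).bddBelow ⟨r, hrp, rfl⟩
  have hxrQ : x r ≤ sSup (S q) := le_csSup (hSfin q).bddAbove ⟨r, hrq, rfl⟩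
  have hup := (hsafe p).2
  have hlo := (hsafe q).1
  have h1 : (1 - ρ) * sSup (S p) ≤ (1 - ρ) * sSup (Set.range x) :=
    mul_le_mul_of_nonneg_left hSupP (by linarith)
  have h2 : ρ * sInf (S p) ≤ ρ * x r := mul_le_mul_of_nonneg_left hxrP hρ0.le
  have h3 : ρ * x r ≤ ρ * sSup (S q) := mul_le_mul_of_nonneg_left hxrQ hρ0.le
  have h4 : (1 - ρ) * sInf (Set.range x) ≤ (1 - ρ) * sInf (S q) :=
    mul_le_mul_of_nonneg_left hInfQ (by linarith)
  have : x' p - x' q ≤ (1 - ρ) * (sSup (Set.range x) - sInf (Set.range x)) := by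
    nlinarith
  simpa [delta, hp, hq, mul_sub] using this
end

section
/- Let n ≥ 1, ρ ∈ (0, 1/2], and ε ∈ (0, 1). Let (G(k))_{k≥1} be a sequence of nonsplit communication graphs on n nodes and let x : ℕ → ℝ^n satisfy x(0) ∈ [0,1]^n and, for each k ≥ 1, x(k) is a ρ-safe update of x(k−1) along G(k). Then δ(x(K)) ≤ ε for K = ⌈log_{1/(1−ρ)}(1/ε)⌉. (In a nonsplit network model, a ρ-safe averaging algorithm achieves ε-agreement in ⌈log_{1/(1−ρ)}(1/ε)⌉ rounds.) -/
lemma delta_step {n : ℕ} [Nonempty (Fin n)] {ρ : ℝ} (hρ0 : 0 < ρ) (hρ1 : ρ ≤ 1 / 2)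
    {E : Fin n → Fin n → Prop} (hrefl : ∀ p, E p p) (hns : Nonsplit E)
    {x x' : Fin n → ℝ} (h : SafeUpdate ρ E x x') :
    delta x' ≤ (1 - ρ) * delta x := by
  have hbdd : BddAbove (Set.range x) := (Set.finite_range x).bddAbove
  have hbddb : BddBelow (Set.range x) := (Set.finite_range x).bddBelow
  have key : ∀ p q, x' p - x' q ≤ (1 - ρ) * delta x := by
    intro p q
    obtain ⟨r, hrp, hrq⟩ := hns p q
    set Sp := sSup (x '' {s | E s p}) with hSp
    set Ip := sInf (x '' {s | E s p}) with hIp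
    set Sq := sSup (x '' {s | E s q}) with hSq
    set Iq := sInf (x '' {s | E s q}) with hIq
    have hsub_p : x '' {s | E s p} ⊆ Set.range x := Set.image_subset_range _ _
    have hsub_q : x '' {s | E s q} ⊆ Set.range x := Set.image_subset_range _ _
    have h1 : Ip ≤ x r := csInf_le (hbddb.mono hsub_p) ⟨r, hrp, rfl⟩
    have h2 : x r ≤ Sq := le_csSup (hbdd.mono hsub_q) ⟨r, hrq, rfl⟩
    have h3 : Sp ≤ sSup (Set.range x) :=
      csSup_le_csSup hbdd ⟨x p, p, hrefl p, rfl⟩ hsub_p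
    have h4 : sInf (Set.range x) ≤ Iq :=
      csInf_le_csInf hbddb ⟨x q, q, hrefl q, rfl⟩ hsub_q
    have hp := (h p).2
    have hq := (h q).1
    have hr1 : (0:ℝ) ≤ 1 - ρ := by linarith
    have e1 := mul_le_mul_of_nonneg_left h3 hr1
    have e2 := mul_le_mul_of_nonneg_left h4 hr1
    have e3 := mul_le_mul_of_nonneg_left (h1.trans h2) hρ0.le
    simp only [delta]
    nlinarith [e1, e2, e3, hp, hq]
  have hne' : (Set.range x').Nonempty := Set.range_nonempty _
  rw [delta, sub_le_iff_le_add]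
  apply csSup_le hne'
  rintro a ⟨p, rfl⟩
  have : x' p - (1 - ρ) * delta x ≤ sInf (Set.range x') := by
    apply le_csInf hne'
    rintro b ⟨q, rfl⟩
    linarith [key p q]
  linarith

theorem safe_update_eps_agreement
    (n : ℕ) (hn : 1 ≤ n) (ρ ε : ℝ) (hρ0 : 0 < ρ) (hρ2 : ρ ≤ 1 / 2)
    (hε0 : 0 < ε) (hε1 : ε < 1)
    (G : ℕ → Fin n → Fin n → Prop)
    (hrefl : ∀ k, 1 ≤ k → ∀ p, G k p p)
    (hns : ∀ k, 1 ≤ k → Nonsplit (G k))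
    (x : ℕ → Fin n → ℝ)
    (hx0 : ∀ p, x 0 p ∈ Set.Icc (0 : ℝ) 1)
    (hupd : ∀ k, 1 ≤ k → SafeUpdate ρ (G k) (x (k - 1)) (x k)) :
    delta (x ⌈Real.logb (1 / (1 - ρ)) (1 / ε)⌉₊) ≤ ε := by
  haveI : Nonempty (Fin n) := ⟨⟨0, hn⟩⟩
  have hρ1 : (0:ℝ) < 1 - ρ := by linarith
  have hρlt1 : 1 - ρ < 1 := by linarith
  -- delta at time 0 is at most 1
  have hδ0 : delta (x 0) ≤ 1 := by
    have hs : sSup (Set.range (x 0)) ≤ 1 := by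
      apply csSup_le (Set.range_nonempty _)
      rintro a ⟨p, rfl⟩; exact (hx0 p).2
    have hi : (0:ℝ) ≤ sInf (Set.range (x 0)) := by
      apply le_csInf (Set.range_nonempty _)
      rintro a ⟨p, rfl⟩; exact (hx0 p).1
    simp only [delta]; linarith
  -- induction
  have hk : ∀ k, delta (x k) ≤ (1 - ρ) ^ k := by
    intro k
    induction k with
    | zero => simpa using hδ0
    | succ k ih =>
      have hstep := delta_step hρ0 hρ2 (hrefl (k+1) (Nat.le_add_left 1 k))
        (hns (k+1) (Nat.le_add_left 1 k)) (hupd (k+1) (Nat.le_add_left 1 k))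
      calc delta (x (k+1)) ≤ (1 - ρ) * delta (x k) := hstep
        _ ≤ (1 - ρ) * (1 - ρ) ^ k := by nlinarith
        _ = (1 - ρ) ^ (k+1) := (pow_succ' _ _).symm
  set K := ⌈Real.logb (1 / (1 - ρ)) (1 / ε)⌉₊ with hK
  set b : ℝ := 1 / (1 - ρ) with hb
  have hb1 : 1 < b := (one_lt_div hρ1).mpr hρlt1
  have hb0 : 0 < b := lt_trans one_pos hb1
  have hlogK : Real.logb b (1 / ε) ≤ (K : ℝ) := Nat.le_ceil _
  have hεinv : (0:ℝ) < 1 / ε := by positivity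
  have hmain : 1 / ε ≤ b ^ (K : ℝ) := by
    rw [← Real.rpow_logb hb0 (ne_of_gt hb1) hεinv]
    exact Real.rpow_le_rpow_left_iff hb1 |>.mpr hlogK
  rw [Real.rpow_natCast] at hmain
  have hbK : (0:ℝ) < b ^ K := by positivity
  have heq : (1 - ρ) ^ K = (b ^ K)⁻¹ := by
    rw [← inv_pow]
    congr 1
    rw [hb, one_div, inv_inv]
  have hfin : (1 - ρ) ^ K ≤ ε := by
    rw [heq]
    have : ε⁻¹ ≤ b ^ K := by rwa [one_div] at hmain
    calc (b ^ K)⁻¹ ≤ (ε⁻¹)⁻¹ := by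
          apply inv_anti₀ (by positivity) this
      _ = ε := inv_inv ε
  exact (hk K).trans hfin
end

section
/- Let n ≥ 1 and let G_1, G_2, …, G_{n−1} be rooted communication graphs on n nodes. Then the product G_1 ∘ G_2 ∘ ⋯ ∘ G_{n−1} is nonsplit. -/
/-- A communication graph is rooted if there is a node `r` from which every node is
reachable by a directed path. -/
def Rooted {n : ℕ} (E : Fin n → Fin n → Prop) : Prop :=
  ∃ r, ∀ p, Relation.ReflTransGen E r p

/-- `GraphProd G m` is the product `G 1 ∘ G 2 ∘ ⋯ ∘ G m` of communication graphs, where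
the product `G ∘ H` has an edge `(p,q)` iff there is `r` with edges `(p,r) ∈ G` and
`(r,q) ∈ H`; the empty product is the identity graph. -/
def GraphProd {n : ℕ} (G : ℕ → Fin n → Fin n → Prop) : ℕ → Fin n → Fin n → Prop
  | 0 => fun p q => p = q
  | m + 1 => fun p q => ∃ r, GraphProd G m p r ∧ G (m + 1) r q

open Classical in
/-- The set of predecessors of a set `S` under the edge relation `E`. -/
noncomputable def predSet {n : ℕ} (E : Fin n → Fin n → Prop) (S : Finset (Fin n)) :
    Finset (Fin n) :=
  Finset.univ.filter (fun u => ∃ v ∈ S, E u v)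

lemma mem_predSet {n : ℕ} {E : Fin n → Fin n → Prop} {S : Finset (Fin n)} {u : Fin n} :
    u ∈ predSet E S ↔ ∃ v ∈ S, E u v := by
  simp [predSet]

lemma subset_predSet {n : ℕ} {E : Fin n → Fin n → Prop} (hre : ∀ p, E p p)
    {S : Finset (Fin n)} : S ⊆ predSet E S := by
  intro u hu
  exact mem_predSet.mpr ⟨u, hu, hre u⟩

/-- Crossing lemma: a path from outside `S` to inside `S` contains an edge entering `S`. -/
lemma crossing {α : Type*} {E : α → α → Prop} {S : α → Prop} {x y : α}
    (h : Relation.ReflTransGen E x y) (hx : ¬ S x) :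
    S y → ∃ u v, ¬ S u ∧ S v ∧ E u v := by
  induction h with
  | refl => exact fun hy => absurd hy hx
  | tail h1 h2 ih =>
    intro hy
    rename_i b c
    by_cases hb : S b
    · exact ih hb
    · exact ⟨b, c, hb, hy, h2⟩

/-- Step lemma: for a reflexive rooted graph, either the predecessor sets of two
nonempty sets intersect, or the union strictly grows. -/
lemma step_lemma {n : ℕ} {E : Fin n → Fin n → Prop} (hre : ∀ p, E p p) (hro : Rooted E)
    {A B : Finset (Fin n)} (hA : A.Nonempty) (hB : B.Nonempty) :
    (∃ r, r ∈ predSet E A ∧ r ∈ predSet E B) ∨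
      (A ∪ B).card < (predSet E A ∪ predSet E B).card := by
  have hsub : A ∪ B ⊆ predSet E A ∪ predSet E B :=
    Finset.union_subset_union (subset_predSet hre) (subset_predSet hre)
  have hgrow : ∀ u, u ∉ A → u ∉ B → u ∈ predSet E A ∪ predSet E B →
      (A ∪ B).card < (predSet E A ∪ predSet E B).card := by
    intro u huA huB hu
    apply Finset.card_lt_card
    rw [Finset.ssubset_iff_of_subset hsub]
    exact ⟨u, hu, by simp [huA, huB]⟩
  by_cases hAB : ∃ r, r ∈ A ∧ r ∈ B
  · obtain ⟨r, h1, h2⟩ := hAB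
    exact Or.inl ⟨r, subset_predSet hre h1, subset_predSet hre h2⟩
  · obtain ⟨ρ, hρ⟩ := hro
    by_cases hρA : ρ ∈ A
    · obtain ⟨b, hb⟩ := hB
      have hρB : ρ ∉ B := fun h => hAB ⟨ρ, hρA, h⟩
      obtain ⟨u, v, hu, hv, huv⟩ := crossing (S := fun x => x ∈ B) (hρ b) hρB hb
      have huB' : u ∈ predSet E B := mem_predSet.mpr ⟨v, hv, huv⟩
      by_cases huA : u ∈ A
      · exact Or.inl ⟨u, subset_predSet hre huA, huB'⟩
      · exact Or.inr (hgrow u huA hu (Finset.mem_union_right _ huB'))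
    · by_cases hρB : ρ ∈ B
      · obtain ⟨a, ha⟩ := hA
        obtain ⟨u, v, hu, hv, huv⟩ := crossing (S := fun x => x ∈ A) (hρ a) hρA ha
        have huA' : u ∈ predSet E A := mem_predSet.mpr ⟨v, hv, huv⟩
        by_cases huB : u ∈ B
        · exact Or.inl ⟨u, huA', subset_predSet hre huB⟩
        · exact Or.inr (hgrow u hu huB (Finset.mem_union_left _ huA'))
      · obtain ⟨a, ha⟩ := hA
        have hρU : ¬ (ρ ∈ A ∨ ρ ∈ B) := by tauto
        obtain ⟨u, v, hu, hv, huv⟩ :=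
          crossing (S := fun x => x ∈ A ∨ x ∈ B) (hρ a) hρU (Or.inl ha)
        have huA : u ∉ A := fun h => hu (Or.inl h)
        have huB : u ∉ B := fun h => hu (Or.inr h)
        rcases hv with hv | hv
        · exact Or.inr (hgrow u huA huB
            (Finset.mem_union_left _ (mem_predSet.mpr ⟨v, hv, huv⟩)))
        · exact Or.inr (hgrow u huA huB
            (Finset.mem_union_right _ (mem_predSet.mpr ⟨v, hv, huv⟩)))

/-- The iterated predecessor sets: `Tset G p i` is the set of nodes from which `p`
is reachable using the last `i` graphs `G (n-i), …, G (n-1)` in order. -/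
noncomputable def Tset {n : ℕ} (G : ℕ → Fin n → Fin n → Prop) (p : Fin n) :
    ℕ → Finset (Fin n)
  | 0 => {p}
  | i + 1 => predSet (G (n - 1 - i)) (Tset G p i)

theorem product_of_rooted_is_nonsplit
    (n : ℕ) (hn : 1 ≤ n) (G : ℕ → Fin n → Fin n → Prop)
    (hrefl : ∀ k, 1 ≤ k → k ≤ n - 1 → ∀ p, G k p p)
    (hrooted : ∀ k, 1 ≤ k → k ≤ n - 1 → Rooted (G k)) :
    Nonsplit (GraphProd G (n - 1)) := by
  -- soundness of Tset: membership gives an edge in the product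
  have T_sound : ∀ p : Fin n, ∀ i, i ≤ n - 1 → ∀ r ∈ Tset G p i, ∀ s,
      GraphProd G (n - 1 - i) s r → GraphProd G (n - 1) s p := by
    intro p i
    induction i with
    | zero =>
      intro _ r hr s hs
      simp only [Tset, Finset.mem_singleton] at hr
      subst hr
      exact hs
    | succ i ih =>
      intro hi r hr s hs
      obtain ⟨v, hv, hrv⟩ := mem_predSet.mp hr
      apply ih (by omega) v hv s
      have harith : n - 1 - i = (n - 1 - (i + 1)) + 1 := by omega
      rw [harith]
      exact ⟨r, hs, by rw [← harith]; exact hrv⟩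
  -- nonemptiness of Tset
  have T_ne : ∀ p : Fin n, ∀ i, i ≤ n - 1 → (Tset G p i).Nonempty := by
    intro p i
    induction i with
    | zero => intro _; exact ⟨p, by simp [Tset]⟩
    | succ i ih =>
      intro hi
      obtain ⟨r, hr⟩ := ih (by omega)
      exact ⟨r, subset_predSet (hrefl (n - 1 - i) (by omega) (by omega)) hr⟩
  intro p q
  -- the key invariant
  have key : ∀ i, i ≤ n - 1 →
      (∃ r, r ∈ Tset G p i ∧ r ∈ Tset G q i) ∨
        (i + 2 ≤ (Tset G p i ∪ Tset G q i).card) := by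
    intro i
    induction i with
    | zero =>
      intro _
      by_cases hpq : p = q
      · exact Or.inl ⟨p, by simp [Tset], by simp [Tset, hpq]⟩
      · right
        have : ({p} : Finset (Fin n)) ∪ {q} = {p, q} := by
          ext x; simp [or_comm]
        simp only [Tset, this]
        rw [Finset.card_insert_of_notMem (by simp [hpq])]
        simp
    | succ i ih =>
      intro hi
      have hk1 : 1 ≤ n - 1 - i := by omega
      have hk2 : n - 1 - i ≤ n - 1 := by omega
      have hre := hrefl (n - 1 - i) hk1 hk2
      rcases ih (by omega) with ⟨r, h1, h2⟩ | hcard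
      · exact Or.inl ⟨r, subset_predSet hre h1, subset_predSet hre h2⟩
      · rcases step_lemma hre (hrooted (n - 1 - i) hk1 hk2)
          (T_ne p i (by omega)) (T_ne q i (by omega)) with h | h
        · exact Or.inl h
        · right
          show i + 1 + 2 ≤ (predSet _ (Tset G p i) ∪ predSet _ (Tset G q i)).card
          omega
  rcases key (n - 1) le_rfl with ⟨r, h1, h2⟩ | hcard
  · refine ⟨r, ?_, ?_⟩
    · apply T_sound p (n - 1) le_rfl r h1 r
      simp [Nat.sub_self, GraphProd]
    · apply T_sound q (n - 1) le_rfl r h2 r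
      simp [Nat.sub_self, GraphProd]
  · exfalso
    have := Finset.card_le_univ (Tset G p (n - 1) ∪ Tset G q (n - 1))
    simp at this
    omega
end

section
/- Let n ≥ 1, let m ≥ n−1, and let G_1, …, G_m be communication graphs on n nodes such that at least n−1 of them are rooted. Then the product G_1 ∘ G_2 ∘ ⋯ ∘ G_m is nonsplit. -/
/-!
Fix nodes `p`, `q` and follow their in-neighbourhoods in `G 1 ∘ ⋯ ∘ G m` backwards, peeling
off the factors from `G m` down to `G 1`. Self-loops make both sets grow. While they are
disjoint, every rooted factor strictly enlarges one of them, since otherwise both would be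
closed under in-neighbours and hence both contain the root. With `n - 1` rooted factors two
disjoint sets would end up with `n + 1` nodes in total, so `p` and `q` share an in-neighbour.
-/

open Finset

section InNeighbors

variable {n : ℕ}

open scoped Classical in
noncomputable def inNeighbors (E : Fin n → Fin n → Prop) (A : Finset (Fin n)) : Finset (Fin n) :=
  univ.filter fun x => ∃ y ∈ A, E x y

@[simp]
theorem mem_inNeighbors {E : Fin n → Fin n → Prop} {A : Finset (Fin n)} {x : Fin n} :
    x ∈ inNeighbors E A ↔ ∃ y ∈ A, E x y := by
  simp [inNeighbors]

theorem subset_inNeighbors {E : Fin n → Fin n → Prop} (hE : ∀ p, E p p) (A : Finset (Fin n)) :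
    A ⊆ inNeighbors E A :=
  fun x hx => mem_inNeighbors.2 ⟨x, hx, hE x⟩

theorem mem_of_reflTransGen_of_inNeighbors_subset {E : Fin n → Fin n → Prop} {A : Finset (Fin n)}
    (hA : inNeighbors E A ⊆ A) {r a : Fin n} (hr : Relation.ReflTransGen E r a) (ha : a ∈ A) :
    r ∈ A := by
  induction hr using Relation.ReflTransGen.head_induction_on with
  | refl => exact ha
  | head hrs _ ih => exact hA (mem_inNeighbors.2 ⟨_, ih, hrs⟩)

theorem Rooted.card_add_card_lt_card_inNeighbors {E : Fin n → Fin n → Prop} (hE : Rooted E)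
    (hrefl : ∀ p, E p p) {A B : Finset (Fin n)} (hA : A.Nonempty) (hB : B.Nonempty)
    (hAB : Disjoint A B) : #A + #B < #(inNeighbors E A) + #(inNeighbors E B) := by
  have hA' := subset_inNeighbors hrefl A
  have hB' := subset_inNeighbors hrefl B
  by_contra! hle
  have hAeq := eq_of_subset_of_card_le hA' (by have := card_le_card hB'; omega)
  have hBeq := eq_of_subset_of_card_le hB' (by have := card_le_card hA'; omega)
  obtain ⟨r, hr⟩ := hE
  obtain ⟨a, ha⟩ := hA
  obtain ⟨b, hb⟩ := hB
  exact disjoint_left.1 hAB (mem_of_reflTransGen_of_inNeighbors_subset hAeq.ge (hr a) ha)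
    (mem_of_reflTransGen_of_inNeighbors_subset hBeq.ge (hr b) hb)

end InNeighbors

section GraphProd

variable {n : ℕ} (G : ℕ → Fin n → Fin n → Prop)

theorem graphProd_refl {m : ℕ} (hrefl : ∀ k, 1 ≤ k → k ≤ m → ∀ p, G k p p) (p : Fin n) :
    GraphProd G m p p := by
  induction m with
  | zero => rfl
  | succ m ih =>
    exact ⟨p, ih fun k hk hkm => hrefl k hk (by omega), hrefl (m + 1) (by omega) le_rfl p⟩

theorem inNeighbors_graphProd_succ (m : ℕ) (A : Finset (Fin n)) :
    inNeighbors (GraphProd G (m + 1)) A =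
      inNeighbors (GraphProd G m) (inNeighbors (G (m + 1)) A) := by
  ext x
  simp only [mem_inNeighbors, GraphProd]
  constructor
  · rintro ⟨y, hy, r, hxr, hry⟩
    exact ⟨r, ⟨y, hy, hry⟩, hxr⟩
  · rintro ⟨r, ⟨y, hy, hry⟩, hxr⟩
    exact ⟨y, hy, r, hxr, hry⟩

theorem card_add_card_add_card_le_of_disjoint_inNeighbors_graphProd {m : ℕ}
    (hrefl : ∀ k, 1 ≤ k → k ≤ m → ∀ p, G k p p) {R : Finset ℕ} (hR : R ⊆ Icc 1 m)
    (hrooted : ∀ k ∈ R, Rooted (G k)) {A B : Finset (Fin n)} (hA : A.Nonempty)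
    (hB : B.Nonempty)
    (hdisj : Disjoint (inNeighbors (GraphProd G m) A) (inNeighbors (GraphProd G m) B)) :
    #A + #B + #R ≤ #(inNeighbors (GraphProd G m) A) + #(inNeighbors (GraphProd G m) B) := by
  induction m generalizing A B R with
  | zero =>
    have hR0 : R = ∅ := subset_empty.1 (by simpa using hR)
    have hA' := card_le_card (subset_inNeighbors (graphProd_refl G hrefl) A)
    have hB' := card_le_card (subset_inNeighbors (graphProd_refl G hrefl) B)
    simp only [hR0, card_empty]
    omega
  | succ m ih =>
    have hreflm : ∀ k, 1 ≤ k → k ≤ m → ∀ p, G k p p := fun k hk hkm => hrefl k hk (by omega)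
    have hrefl_succ : ∀ p, G (m + 1) p p := hrefl (m + 1) (by omega) le_rfl
    set A' := inNeighbors (G (m + 1)) A
    set B' := inNeighbors (G (m + 1)) B
    simp only [inNeighbors_graphProd_succ] at hdisj ⊢
    have hAA' := subset_inNeighbors hrefl_succ A
    have hBB' := subset_inNeighbors hrefl_succ B
    have hR' : R.erase (m + 1) ⊆ Icc 1 m := fun k hk => by
      have := hR (mem_of_mem_erase hk)
      have := ne_of_mem_erase hk
      simp only [mem_Icc] at *
      omega
    have hIH := ih hreflm hR' (fun k hk => hrooted k (mem_of_mem_erase hk)) (hA.mono hAA')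
      (hB.mono hBB') hdisj
    by_cases hmR : m + 1 ∈ R
    · have hAB : Disjoint A B := hdisj.mono
        (hAA'.trans (subset_inNeighbors (graphProd_refl G hreflm) A'))
        (hBB'.trans (subset_inNeighbors (graphProd_refl G hreflm) B'))
      have hgrow := (hrooted _ hmR).card_add_card_lt_card_inNeighbors hrefl_succ hA hB hAB
      have := card_erase_add_one hmR
      omega
    · have := card_le_card hAA'
      have := card_le_card hBB'
      rw [erase_eq_of_notMem hmR] at hIH
      omega

end GraphProd

theorem product_with_enough_rooted_is_nonsplit_general
    (n m : ℕ)
    (G : ℕ → Fin n → Fin n → Prop)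
    (hrefl : ∀ k, 1 ≤ k → k ≤ m → ∀ p, G k p p)
    (hrooted : ∃ S : Finset ℕ, S ⊆ Finset.Icc 1 m ∧ n - 1 ≤ S.card ∧
      ∀ k ∈ S, Rooted (G k)) :
    Nonsplit (GraphProd G m) := by
  intro p q
  by_contra! hsplit
  obtain ⟨R, hR, hcard, hRrooted⟩ := hrooted
  have hdisj : Disjoint (inNeighbors (GraphProd G m) {p}) (inNeighbors (GraphProd G m) {q}) := by
    simpa [disjoint_left] using hsplit
  have hgrow := card_add_card_add_card_le_of_disjoint_inNeighbors_graphProd G hrefl hR hRrooted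
    (singleton_nonempty p) (singleton_nonempty q) hdisj
  have hle := card_le_univ (inNeighbors (GraphProd G m) {p} ∪ inNeighbors (GraphProd G m) {q})
  rw [card_union_of_disjoint hdisj, Fintype.card_fin] at hle
  simp only [card_singleton] at hgrow
  have := p.pos
  omega

theorem product_with_enough_rooted_is_nonsplit
    (n m : ℕ) (hn : 1 ≤ n) (hm : n - 1 ≤ m)
    (G : ℕ → Fin n → Fin n → Prop)
    (hrefl : ∀ k, 1 ≤ k → k ≤ m → ∀ p, G k p p)
    (hrooted : ∃ S : Finset ℕ, S ⊆ Finset.Icc 1 m ∧ n - 1 ≤ S.card ∧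
      ∀ k ∈ S, Rooted (G k)) :
    Nonsplit (GraphProd G m) :=
  product_with_enough_rooted_is_nonsplit_general n m G hrefl hrooted
end

section
/- For n = 2: every averaging algorithm (u_1, u_2) for 2 processes that is α-contracting in the nonsplit network model satisfies α ≥ 1/3. That is, if for every nonsplit communication graph G on 2 nodes and every x ∈ [0,1]², the vector x' with x'_p = u_p(In_p(G), x) satisfies δ(x') ≤ α·δ(x), then α ≥ 1/3. -/
lemma range_two (y : Fin 2 → ℝ) : Set.range y = {y 0, y 1} := by
  ext z
  constructor
  · rintro ⟨i, rfl⟩; fin_cases i <;> simp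
  · rintro (rfl | rfl)
    · exact ⟨0, rfl⟩
    · exact ⟨1, rfl⟩

lemma delta_two (y : Fin 2 → ℝ) : delta y = max (y 0) (y 1) - min (y 0) (y 1) := by
  unfold delta
  rw [range_two, csSup_pair, csInf_pair]

theorem two_proc_contraction_lower_bound
    (α : ℝ)
    (u : Fin 2 → Set (Fin 2) → (Fin 2 → ℝ) → ℝ)
    -- (i) `u p S x` lies between the min and the max of the values `x q`, `q ∈ S`
    (hrange : ∀ (p : Fin 2) (S : Set (Fin 2)) (x : Fin 2 → ℝ), S.Nonempty →
      sInf (x '' S) ≤ u p S x ∧ u p S x ≤ sSup (x '' S))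
    -- (ii) `u p S x` depends only on the values `x q` for `q ∈ S`
    (hdep : ∀ (p : Fin 2) (S : Set (Fin 2)) (x y : Fin 2 → ℝ),
      (∀ q ∈ S, x q = y q) → u p S x = u p S y)
    -- the algorithm is α-contracting in the nonsplit network model
    (hcontract : ∀ E : Fin 2 → Fin 2 → Prop, (∀ p, E p p) → Nonsplit E →
      ∀ x : Fin 2 → ℝ, (∀ p, x p ∈ Set.Icc (0 : ℝ) 1) →
        delta (fun p => u p {q | E q p} x) ≤ α * delta x) :
    1 / 3 ≤ α := by
  set x : Fin 2 → ℝ := ![0, 1] with hx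
  have hx0 : x 0 = 0 := rfl
  have hx1 : x 1 = 1 := rfl
  have hxmem : ∀ p, x p ∈ Set.Icc (0 : ℝ) 1 := by
    intro p; fin_cases p <;> constructor <;> norm_num [hx]
  have hdx : delta x = 1 := by rw [delta_two, hx0, hx1]; norm_num
  -- image facts
  have himg_univ : x '' Set.univ = {0, 1} := by
    rw [Set.image_univ, range_two, hx0, hx1]
  have himg0 : x '' {0} = {(0:ℝ)} := by rw [Set.image_singleton, hx0]
  have himg1 : x '' {1} = {(1:ℝ)} := by rw [Set.image_singleton, hx1]
  -- a and b
  set a := u 0 Set.univ x with ha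
  set b := u 1 Set.univ x with hb
  have haB : 0 ≤ a ∧ a ≤ 1 := by
    have := hrange 0 Set.univ x ⟨0, trivial⟩
    rw [himg_univ] at this
    rwa [csInf_pair, csSup_pair, min_eq_left, max_eq_right] at this <;> norm_num
  have hbB : 0 ≤ b ∧ b ≤ 1 := by
    have := hrange 1 Set.univ x ⟨0, trivial⟩
    rw [himg_univ] at this
    rwa [csInf_pair, csSup_pair, min_eq_left, max_eq_right] at this <;> norm_num
  have hu00 : u 0 {0} x = 0 := by
    have := hrange 0 {0} x ⟨0, rfl⟩
    rw [himg0, csInf_singleton, csSup_singleton] at this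
    linarith [this.1, this.2]
  have hu11 : u 1 {1} x = 1 := by
    have := hrange 1 {1} x ⟨1, rfl⟩
    rw [himg1, csInf_singleton, csSup_singleton] at this
    linarith [this.1, this.2]
  -- Graph A: extra edge 0 → 1
  have hA := hcontract (fun q p => q = p ∨ (q = 0 ∧ p = 1)) (fun p => Or.inl rfl)
      (by intro p q; exact ⟨0, by fin_cases p <;> simp, by fin_cases q <;> simp⟩) x hxmem
  have hsA0 : {q : Fin 2 | q = 0 ∨ (q = 0 ∧ (0:Fin 2) = 1)} = ({0} : Set (Fin 2)) := by
    ext q; simp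
  have hsA1 : {q : Fin 2 | q = 1 ∨ (q = 0 ∧ (1:Fin 2) = 1)} = (Set.univ : Set (Fin 2)) := by
    ext q; fin_cases q <;> simp
  have eA1 : ({q : Fin 2 | q = 1 ∨ q = 0 ∧ True}) = Set.univ := by ext q; fin_cases q <;> simp
  rw [delta_two, hdx] at hA
  simp only [hsA0, hsA1, eA1] at hA
  rw [hu00] at hA
  -- Graph B: extra edge 1 → 0
  have hB := hcontract (fun q p => q = p ∨ (q = 1 ∧ p = 0)) (fun p => Or.inl rfl)
      (by intro p q; exact ⟨1, by fin_cases p <;> simp, by fin_cases q <;> simp⟩) x hxmem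
  have hsB0 : {q : Fin 2 | q = 0 ∨ (q = 1 ∧ (0:Fin 2) = 0)} = (Set.univ : Set (Fin 2)) := by
    ext q; fin_cases q <;> simp
  have hsB1 : {q : Fin 2 | q = 1 ∨ (q = 1 ∧ (1:Fin 2) = 0)} = ({1} : Set (Fin 2)) := by
    ext q; simp
  have eB0 : ({q : Fin 2 | q = 0 ∨ q = 1 ∧ True}) = Set.univ := by ext q; fin_cases q <;> simp
  rw [delta_two, hdx] at hB
  simp only [hsB0, hsB1, eB0] at hB
  rw [hu11] at hB
  -- Graph C: complete
  have hC := hcontract (fun _ _ => True) (fun _ => trivial)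
      (fun p q => ⟨0, trivial, trivial⟩) x hxmem
  have hsC : ∀ p : Fin 2, {q : Fin 2 | True} = (Set.univ : Set (Fin 2)) := fun _ => rfl
  rw [delta_two, hdx] at hC
  simp only [Set.setOf_true] at hC
  -- conclude
  have h1 : b ≤ α := by
    linarith [le_sup_right (a := (0:ℝ)) (b := b), inf_le_left (a := (0:ℝ)) (b := b)]
  have h2 : 1 - a ≤ α := by
    linarith [le_sup_right (a := a) (b := (1:ℝ)), inf_le_left (a := a) (b := (1:ℝ))]
  have h3 : a - b ≤ α := by
    linarith [le_sup_left (a := a) (b := b), inf_le_right (a := a) (b := b)]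
  linarith
end

section
/- For every n ≥ 3: every averaging algorithm (u_p)_{p∈{1,…,n}} for n processes that is α-contracting in the nonsplit network model satisfies α ≥ 1/2. That is, if for every nonsplit communication graph G on n nodes and every x ∈ [0,1]^n, the vector x' with x'_p = u_p(In_p(G), x) satisfies δ(x') ≤ α·δ(x), then α ≥ 1/2. -/
/-!
Feed the input `x = 𝟙_{1}` (so `δ(x) = 1`) and let node `2` hear exactly `{0, 1, 2}`. Whatever
value `c` it then computes, a nonsplit graph can additionally let everybody hear node `0`, or
everybody hear node `1`, while that node hears only itself and so keeps its input `0`, resp. `1`.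
Contraction bounds both `|0 - c|` and `|1 - c|` by `α`, hence `1 ≤ 2α`.
-/

open Set

variable {n : ℕ}

lemma sub_le_delta (y : Fin n → ℝ) (a b : Fin n) : y a - y b ≤ delta y :=
  sub_le_sub (le_csSup (finite_range y).bddAbove (mem_range_self a))
    (csInf_le (finite_range y).bddBelow (mem_range_self b))

lemma delta_le_of_mem_Icc [Nonempty (Fin n)] {x : Fin n → ℝ} {a b : ℝ}
    (hx : ∀ p, x p ∈ Icc a b) : delta x ≤ b - a :=
  sub_le_sub (csSup_le (range_nonempty x) (forall_mem_range.2 fun p => (hx p).2))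
    (le_csInf (range_nonempty x) (forall_mem_range.2 fun p => (hx p).1))

lemma eq_of_mem_bounds_image_singleton {α : Type*} {x : α → ℝ} {p : α} {v : ℝ}
    (h : sInf (x '' {p}) ≤ v ∧ v ≤ sSup (x '' {p})) : v = x p := by
  rw [image_singleton, csInf_singleton, csSup_singleton] at h
  exact le_antisymm h.2 h.1

def broadcastGraph (s t : Fin n) (T : Set (Fin n)) (r p : Fin n) : Prop :=
  r = s ∨ r = p ∨ (p = t ∧ r ∈ T)

section broadcastGraph

variable {s t : Fin n} {T : Set (Fin n)}

lemma broadcastGraph_refl (p : Fin n) : broadcastGraph s t T p p :=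
  Or.inr (Or.inl rfl)

lemma broadcastGraph_nonsplit : Nonsplit (broadcastGraph s t T) :=
  fun _ _ => ⟨s, Or.inl rfl, Or.inl rfl⟩

lemma setOf_broadcastGraph_source (hst : s ≠ t) :
    {q | broadcastGraph s t T q s} = {s} := by
  ext q
  simp only [broadcastGraph, mem_ofPred_eq, mem_singleton_iff]
  constructor
  · rintro (h | h | ⟨h, -⟩)
    exacts [h, h, absurd h hst]
  · exact Or.inl

lemma setOf_broadcastGraph_target (hs : s ∈ T) (ht : t ∈ T) :
    {q | broadcastGraph s t T q t} = T := by
  ext q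
  simp only [broadcastGraph, mem_ofPred_eq, true_and]
  constructor
  · rintro (rfl | rfl | h)
    exacts [hs, ht, h]
  · exact fun h => Or.inr (Or.inr h)

end broadcastGraph

/-- In `broadcastGraph s t T` the node `s` hears only itself and so keeps its input. -/
lemma abs_sub_le_of_contracting {α : ℝ} {u : Fin n → Set (Fin n) → (Fin n → ℝ) → ℝ}
    {x : Fin n → ℝ} (hsingleton : ∀ p, u p {p} x = x p)
    (hcontract : ∀ E : Fin n → Fin n → Prop, (∀ p, E p p) → Nonsplit E →
      delta (fun p => u p {q | E q p} x) ≤ α * delta x)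
    {s t : Fin n} {T : Set (Fin n)} (hst : s ≠ t) (hs : s ∈ T) (ht : t ∈ T) :
    |x s - u t T x| ≤ α * delta x := by
  have hbound := hcontract (broadcastGraph s t T) broadcastGraph_refl broadcastGraph_nonsplit
  set y := fun p => u p {q | broadcastGraph s t T q p} x with hy
  have hys : y s = x s := by simp only [hy, setOf_broadcastGraph_source hst, hsingleton]
  have hyt : y t = u t T x := by simp only [hy, setOf_broadcastGraph_target hs ht]
  rw [abs_sub_le_iff, ← hys, ← hyt]
  exact ⟨(sub_le_delta y s t).trans hbound, (sub_le_delta y t s).trans hbound⟩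

theorem contraction_lower_bound_ge_three_general
    (n : ℕ) (hn : 3 ≤ n) (α : ℝ)
    (u : Fin n → Set (Fin n) → (Fin n → ℝ) → ℝ)
    -- (i) `u p S x` lies between the min and the max of the values `x q`, `q ∈ S`
    (hrange : ∀ (p : Fin n) (S : Set (Fin n)) (x : Fin n → ℝ), S.Nonempty →
      sInf (x '' S) ≤ u p S x ∧ u p S x ≤ sSup (x '' S))
    -- the algorithm is α-contracting in the nonsplit network model
    (hcontract : ∀ E : Fin n → Fin n → Prop, (∀ p, E p p) → Nonsplit E →
      ∀ x : Fin n → ℝ, (∀ p, x p ∈ Set.Icc (0 : ℝ) 1) →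
        delta (fun p => u p {q | E q p} x) ≤ α * delta x) :
    1 / 2 ≤ α := by
  let i : Fin 3 → Fin n := Fin.castLE hn
  have hi : Function.Injective i := Fin.castLE_injective hn
  have h01 : i 0 ≠ i 1 := hi.ne (by decide)
  have h02 : i 0 ≠ i 2 := hi.ne (by decide)
  have h12 : i 1 ≠ i 2 := hi.ne (by decide)
  have : Nonempty (Fin n) := ⟨i 0⟩
  let x : Fin n → ℝ := Pi.single (i 1) 1
  have hx : ∀ p, x p ∈ Icc (0 : ℝ) 1 := fun p => by
    by_cases h : p = i 1 <;> simp [x, h]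
  have hx0 : x (i 0) = 0 := Pi.single_eq_of_ne h01 1
  have hx1 : x (i 1) = 1 := Pi.single_eq_same (i 1) 1
  have hdelta : delta x = 1 := le_antisymm (by simpa using delta_le_of_mem_Icc hx)
    (by simpa [hx0, hx1] using sub_le_delta x (i 1) (i 0))
  have hsingleton : ∀ p, u p {p} x = x p := fun p =>
    eq_of_mem_bounds_image_singleton (hrange p {p} x (singleton_nonempty p))
  have hcontract_x := fun E hE hE' => hcontract E hE hE' x hx
  let T : Set (Fin n) := {i 0, i 1, i 2}
  have h0 := abs_sub_le_of_contracting hsingleton hcontract_x h02 (T := T)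
    (by simp [T]) (by simp [T])
  have h1 := abs_sub_le_of_contracting hsingleton hcontract_x h12 (T := T)
    (by simp [T]) (by simp [T])
  rw [hx0, hdelta, mul_one] at h0
  rw [hx1, hdelta, mul_one] at h1
  linarith [(abs_le.1 h0).1, (abs_le.1 h1).2]

theorem contraction_lower_bound_ge_three
    (n : ℕ) (hn : 3 ≤ n) (α : ℝ)
    (u : Fin n → Set (Fin n) → (Fin n → ℝ) → ℝ)
    -- (i) `u p S x` lies between the min and the max of the values `x q`, `q ∈ S`
    (hrange : ∀ (p : Fin n) (S : Set (Fin n)) (x : Fin n → ℝ), S.Nonempty →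
      sInf (x '' S) ≤ u p S x ∧ u p S x ≤ sSup (x '' S))
    -- (ii) `u p S x` depends only on the values `x q` for `q ∈ S`
    (hdep : ∀ (p : Fin n) (S : Set (Fin n)) (x y : Fin n → ℝ),
      (∀ q ∈ S, x q = y q) → u p S x = u p S y)
    -- the algorithm is α-contracting in the nonsplit network model
    (hcontract : ∀ E : Fin n → Fin n → Prop, (∀ p, E p p) → Nonsplit E →
      ∀ x : Fin n → ℝ, (∀ p, x p ∈ Set.Icc (0 : ℝ) 1) →
        delta (fun p => u p {q | E q p} x) ≤ α * delta x) :
    1 / 2 ≤ α :=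
  contraction_lower_bound_ge_three_general n hn α u hrange hcontract
end

section
/- For n = 2, consider the update rule: given a communication graph G on 2 nodes and x ∈ ℝ², set x'_p = x_p if In_p(G) = {p}, and x'_p = x_p/3 + 2·x_q/3 if In_p(G) = {1,2}, where q is the process other than p. Then for every nonsplit communication graph G on 2 nodes and every x ∈ ℝ², the updated vector x' satisfies |x'_1 − x'_2| = |x_1 − x_2| / 3. (Hence the 1/3 lower bound on the contraction rate for two processes is tight.) -/
theorem two_proc_third_contraction
    (E : Fin 2 → Fin 2 → Prop) (hrefl : ∀ p, E p p) (hns : Nonsplit E)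
    (x x' : Fin 2 → ℝ)
    -- the update rule: `x'_p = x p` if `In_p(G) = {p}`, and
    -- `x'_p = x_p/3 + 2·x_q/3` if `In_p(G) = {1,2}`, where `q = p + 1` is the other process
    (hupd : ∀ p : Fin 2,
      ({q | E q p} = {p} → x' p = x p) ∧
      ({q | E q p} = Set.univ → x' p = x p / 3 + 2 * x (p + 1) / 3)) :
    |x' 0 - x' 1| = |x 0 - x 1| / 3 := by
  have hedge : E 0 1 ∨ E 1 0 := by
    obtain ⟨r, h0, h1⟩ := hns 1 0
    fin_cases r
    · exact Or.inl h0
    · exact Or.inr h1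
  by_cases h01 : E 0 1 <;> by_cases h10 : E 1 0
  · have e0 : x' 0 = x 0 / 3 + 2 * x 1 / 3 := by
      refine (hupd 0).2 ?_
      ext q; fin_cases q <;> simp [hrefl, h10]
    have e1 : x' 1 = x 1 / 3 + 2 * x 0 / 3 := by
      have := (hupd 1).2 (by ext q; fin_cases q <;> simp [hrefl, h01])
      simpa using this
    rw [e0, e1]
    rw [show x 0 / 3 + 2 * x 1 / 3 - (x 1 / 3 + 2 * x 0 / 3) = -((x 0 - x 1) / 3) by ring,
      abs_neg, abs_div]
    norm_num
  · have e0 : x' 0 = x 0 := by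
      refine (hupd 0).1 ?_
      ext q; fin_cases q <;> simp [hrefl, h10]
    have e1 : x' 1 = x 1 / 3 + 2 * x 0 / 3 := by
      have := (hupd 1).2 (by ext q; fin_cases q <;> simp [hrefl, h01])
      simpa using this
    rw [e0, e1, show x 0 - (x 1 / 3 + 2 * x 0 / 3) = (x 0 - x 1) / 3 by ring, abs_div]
    norm_num
  · have e0 : x' 0 = x 0 / 3 + 2 * x 1 / 3 := by
      refine (hupd 0).2 ?_
      ext q; fin_cases q <;> simp [hrefl, h10]
    have e1 : x' 1 = x 1 := by
      refine (hupd 1).1 ?_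
      ext q; fin_cases q <;> simp [hrefl, h01]
    rw [e0, e1, show x 0 / 3 + 2 * x 1 / 3 - x 1 = (x 0 - x 1) / 3 by ring, abs_div]
    norm_num
  · exact absurd hedge (by tauto)
end

section
/- Let n ≥ 1, let G be a nonsplit communication graph on n nodes, let x ∈ ℝ^n, and define x' ∈ ℝ^n by x'_p = (m_p + M_p)/2, where m_p = min{x_q : q ∈ In_p(G)} and M_p = max{x_q : q ∈ In_p(G)}. Then δ(x') ≤ δ(x)/2. (The mid-point algorithm is (1/2)-safe, hence (1/2)-contracting, in any nonsplit network model, showing the 1/2 lower bound on contraction rates is tight for n ≥ 3.) -/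
theorem midpoint_half_contracting
    (n : ℕ) (hn : 1 ≤ n) (E : Fin n → Fin n → Prop)
    (hrefl : ∀ p, E p p) (hns : Nonsplit E)
    (x x' : Fin n → ℝ)
    (hupd : ∀ p, x' p = (sInf (x '' {q | E q p}) + sSup (x '' {q | E q p})) / 2) :
    delta x' ≤ delta x / 2 := by
  have hne : Nonempty (Fin n) := ⟨⟨0, hn⟩⟩
  set M := sSup (Set.range x) with hM
  set m := sInf (Set.range x) with hm
  have hrfin : (Set.range x).Finite := Set.finite_range x
  have hrne : (Set.range x).Nonempty := Set.range_nonempty x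
  have hxleM : ∀ p, x p ≤ M := fun p => le_csSup hrfin.bddAbove ⟨p, rfl⟩
  have hmlex : ∀ p, m ≤ x p := fun p => csInf_le hrfin.bddBelow ⟨p, rfl⟩
  have key : ∀ p q : Fin n, x' p - x' q ≤ (M - m) / 2 := by
    intro p q
    obtain ⟨r, hrp, hrq⟩ := hns p q
    have hfinp : (x '' {q | E q p}).Finite := (Set.toFinite _).image x
    have hfinq : (x '' {s | E s q}).Finite := (Set.toFinite _).image x
    have h1 : sInf (x '' {q | E q p}) ≤ x r := csInf_le hfinp.bddBelow ⟨r, hrp, rfl⟩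
    have h2 : sSup (x '' {q | E q p}) ≤ M := by
      refine csSup_le ⟨x p, p, hrefl p, rfl⟩ ?_
      rintro _ ⟨s, _, rfl⟩; exact hxleM s
    have h3 : m ≤ sInf (x '' {s | E s q}) := by
      refine le_csInf ⟨x q, q, hrefl q, rfl⟩ ?_
      rintro _ ⟨s, _, rfl⟩; exact hmlex s
    have h4 : x r ≤ sSup (x '' {s | E s q}) := le_csSup hfinq.bddAbove ⟨r, hrq, rfl⟩
    rw [hupd p, hupd q]
    linarith
  have hrfin' : (Set.range x').Finite := Set.finite_range x'
  obtain ⟨p, hp⟩ : sSup (Set.range x') ∈ Set.range x' :=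
    (Set.range_nonempty x').csSup_mem hrfin'
  obtain ⟨q, hq⟩ : sInf (Set.range x') ∈ Set.range x' :=
    (Set.range_nonempty x').csInf_mem hrfin'
  have : delta x' = x' p - x' q := by rw [delta, hp, hq]
  rw [this, delta]
  have := key p q
  linarith
end
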